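/- arXiv:2509.05944 — 4 statements merged into one kernel-verified Lean document; each statement's English description precedes it below -/
import Mathlib

section
/- Robustness comparison of quadrature rules for the bilinear map: for arbitrary vertices (r_i, z_i) ∈ ℝ², i = 1,…,4, if the signed quadrilateral area S = ½·(r₄₁z₃₂ − r₃₂z₄₁) is strictly positive and det J(−√(3/5), −√(3/5)) ≥ 0, then det J(−√(1/3), −√(1/3)) > 0. In other words, the Jacobian determinant at the four-point Gauss quadrature point can become singular only after the Jacobian determinant at the corresponding nine-point Gauss quadrature point has already become nonpositive. -/
noncomputable section

/-- Bilinear Q¹ shape functions on the reference square `[-1,1]²`. -/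
def shapeN (i : Fin 4) (ξ η : ℝ) : ℝ :=
  match i with
  | 0 => (1 - ξ) * (1 - η) / 4
  | 1 => (1 + ξ) * (1 - η) / 4
  | 2 => (1 - ξ) * (1 + η) / 4
  | 3 => (1 + ξ) * (1 + η) / 4

/-- The bilinear map with nodal values `c`: `(ξ,η) ↦ Σ_i c_i N_i(ξ,η)`. -/
def bmap (c : Fin 4 → ℝ) (ξ η : ℝ) : ℝ := ∑ i, c i * shapeN i ξ η

/-- Jacobian determinant of the bilinear map with vertices `(r_i, z_i)`:
`det J = (∂r/∂ξ)(∂z/∂η) − (∂r/∂η)(∂z/∂ξ)`. -/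
def detJ (r z : Fin 4 → ℝ) (ξ η : ℝ) : ℝ :=
  deriv (fun s => bmap r s η) ξ * deriv (fun t => bmap z ξ t) η
    - deriv (fun t => bmap r ξ t) η * deriv (fun s => bmap z s η) ξ

/-- Signed triangle area `S_{ijk} = ½[(r_j−r_i)(z_k−z_i) − (r_k−r_i)(z_j−z_i)]`. -/
def triArea (r z : Fin 4 → ℝ) (i j k : Fin 4) : ℝ :=
  ((r j - r i) * (z k - z i) - (r k - r i) * (z j - z i)) / 2

/-- Signed quadrilateral area `S = ½(r₄₁z₃₂ − r₃₂z₄₁)`. -/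
def quadArea (r z : Fin 4 → ℝ) : ℝ :=
  ((r 3 - r 0) * (z 2 - z 1) - (r 2 - r 1) * (z 3 - z 0)) / 2

lemma deriv_bmap_fst (c : Fin 4 → ℝ) (η ξ : ℝ) :
    deriv (fun s => bmap c s η) ξ
      = ((c 1 - c 0) * (1 - η) + (c 3 - c 2) * (1 + η)) / 4 := by
  have h : (fun s => bmap c s η)
      = fun s => (c 0 * (1 - η) + c 1 * (1 - η) + c 2 * (1 + η) + c 3 * (1 + η)) / 4
          + ((c 1 - c 0) * (1 - η) + (c 3 - c 2) * (1 + η)) / 4 * s := by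
    funext s
    simp [bmap, Fin.sum_univ_four, shapeN]
    ring
  rw [h, deriv_const_add, deriv_const_mul _ differentiable_id.differentiableAt, deriv_id'']
  ring

lemma deriv_bmap_snd (c : Fin 4 → ℝ) (ξ η : ℝ) :
    deriv (fun t => bmap c ξ t) η
      = ((c 2 - c 0) * (1 - ξ) + (c 3 - c 1) * (1 + ξ)) / 4 := by
  have h : (fun t => bmap c ξ t)
      = fun t => (c 0 * (1 - ξ) + c 1 * (1 + ξ) + c 2 * (1 - ξ) + c 3 * (1 + ξ)) / 4
          + ((c 2 - c 0) * (1 - ξ) + (c 3 - c 1) * (1 + ξ)) / 4 * t := by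
    funext t
    simp [bmap, Fin.sum_univ_four, shapeN]
    ring
  rw [h, deriv_const_add, deriv_const_mul _ differentiable_id.differentiableAt, deriv_id'']
  ring

lemma detJ_eq (r z : Fin 4 → ℝ) (ξ η : ℝ) :
    detJ r z ξ η
      = ((r 1 - r 0) * (1 - η) + (r 3 - r 2) * (1 + η)) / 4
          * (((z 2 - z 0) * (1 - ξ) + (z 3 - z 1) * (1 + ξ)) / 4)
        - ((r 2 - r 0) * (1 - ξ) + (r 3 - r 1) * (1 + ξ)) / 4
          * (((z 1 - z 0) * (1 - η) + (z 3 - z 2) * (1 + η)) / 4) := by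
  rw [detJ, deriv_bmap_fst, deriv_bmap_snd, deriv_bmap_fst, deriv_bmap_snd]

/-- Robustness comparison: if the signed quadrilateral area `S` is strictly positive and
the Jacobian determinant at the nine-point Gauss quadrature point `(−√(3/5),−√(3/5))` is
nonnegative, then the Jacobian determinant at the four-point Gauss quadrature point
`(−√(1/3),−√(1/3))` is strictly positive. -/
theorem four_point_more_robust_than_nine_point (r z : Fin 4 → ℝ)
    (hS : 0 < quadArea r z)
    (h9 : 0 ≤ detJ r z (-Real.sqrt (3/5)) (-Real.sqrt (3/5))) :
    0 < detJ r z (-Real.sqrt (1/3)) (-Real.sqrt (1/3)) := by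
  set t9 := Real.sqrt (3/5) with ht9def
  set t4 := Real.sqrt (1/3) with ht4def
  set B : ℝ := quadArea r z / 4 - detJ r z (-1) (-1) with hBdef
  have hlin : ∀ t : ℝ, detJ r z (-t) (-t) = quadArea r z / 4 - B * t := by
    intro t
    simp only [hBdef, detJ_eq, quadArea]
    ring
  have h4pos : 0 ≤ t4 := Real.sqrt_nonneg _
  have hlt : t4 < t9 := by
    rw [ht4def, ht9def]
    apply Real.sqrt_lt_sqrt <;> norm_num
  rw [hlin] at h9 ⊢
  rcases le_or_gt B 0 with hB | hB
  · nlinarith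
  · nlinarith
end
end

section
/- For the bilinear map determined by arbitrary vertices (r_i, z_i) ∈ ℝ², i = 1,…,4, the products of the Jacobian determinant with the shape-function gradients are linear combinations of the shape functions themselves: for all (ξ,η), det J·∂N₁/∂r = ¼(−N₁z₃₂ − N₂z₄₂ − N₃z₃₄), det J·∂N₁/∂z = ¼(N₁r₃₂ + N₂r₄₂ + N₃r₃₄); det J·∂N₂/∂r = ¼(−N₁z₁₃ + N₂z₄₁ − N₄z₃₄), det J·∂N₂/∂z = ¼(N₁r₁₃ − N₂r₄₁ + N₄r₃₄); det J·∂N₃/∂r = ¼(−N₁z₂₁ − N₃z₄₁ − N₄z₄₂), det J·∂N₃/∂z = ¼(N₁r₂₁ + N₃r₄₁ + N₄r₄₂); det J·∂N₄/∂r = ¼(−N₂z₂₁ − N₃z₁₃ + N₄z₃₂), det J·∂N₄/∂z = ¼(N₂r₂₁ + N₃r₁₃ − N₄r₃₂). Here ∂N_j/∂r and ∂N_j/∂z denote the components obtained by applying the transposed inverse Jacobian to the reference gradient, i.e., det J·(∂N_j/∂r) = (∂N_j/∂ξ)J₂₂ − (∂N_j/∂η)J₂₁ and det J·(∂N_j/∂z)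 = −(∂N_j/∂ξ)J₁₂ + (∂N_j/∂η)J₁₁. -/
noncomputable section

lemma deriv_affine (a b x : ℝ) : deriv (fun s => a + b * s) x = b := by
  have h : HasDerivAt (fun s : ℝ => a + b * s) b x := by
    simpa using ((hasDerivAt_id x).const_mul b).const_add a
  exact h.deriv

lemma derivξ_bmap (c : Fin 4 → ℝ) (ξ η : ℝ) :
    deriv (fun s => bmap c s η) ξ
      = ((1 - η) / 4 * (c 1 - c 0) + (1 + η) / 4 * (c 3 - c 2)) := by
  have h : (fun s => bmap c s η)
      = fun s => (c 0 * (1 - η) / 4 + c 1 * (1 - η) / 4 + c 2 * (1 + η) / 4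
          + c 3 * (1 + η) / 4)
        + ((1 - η) / 4 * (c 1 - c 0) + (1 + η) / 4 * (c 3 - c 2)) * s := by
    funext s
    simp only [bmap, Fin.sum_univ_four, shapeN]
    ring
  rw [h, deriv_affine]

lemma derivη_bmap (c : Fin 4 → ℝ) (ξ η : ℝ) :
    deriv (fun t => bmap c ξ t) η
      = ((1 - ξ) / 4 * (c 2 - c 0) + (1 + ξ) / 4 * (c 3 - c 1)) := by
  have h : (fun t => bmap c ξ t)
      = fun t => (c 0 * (1 - ξ) / 4 + c 1 * (1 + ξ) / 4 + c 2 * (1 - ξ) / 4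
          + c 3 * (1 + ξ) / 4)
        + ((1 - ξ) / 4 * (c 2 - c 0) + (1 + ξ) / 4 * (c 3 - c 1)) * t := by
    funext t
    simp only [bmap, Fin.sum_univ_four, shapeN]
    ring
  rw [h, deriv_affine]

lemma derivξ_shapeN (i : Fin 4) (ξ η : ℝ) :
    deriv (fun s => shapeN i s η) ξ
      = ![-(1 - η) / 4, (1 - η) / 4, -(1 + η) / 4, (1 + η) / 4] i := by
  fin_cases i
  · show deriv (fun s : ℝ => (1 - s) * (1 - η) / 4) ξ = -(1 - η) / 4
    rw [show (fun s : ℝ => (1 - s) * (1 - η) / 4) = fun s => (1 - η) / 4 + (-(1 - η) / 4) * s from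
      funext fun s => by ring, deriv_affine]
  · show deriv (fun s : ℝ => (1 + s) * (1 - η) / 4) ξ = (1 - η) / 4
    rw [show (fun s : ℝ => (1 + s) * (1 - η) / 4) = fun s => (1 - η) / 4 + ((1 - η) / 4) * s from
      funext fun s => by ring, deriv_affine]
  · show deriv (fun s : ℝ => (1 - s) * (1 + η) / 4) ξ = -(1 + η) / 4
    rw [show (fun s : ℝ => (1 - s) * (1 + η) / 4) = fun s => (1 + η) / 4 + (-(1 + η) / 4) * s from
      funext fun s => by ring, deriv_affine]
  · show deriv (fun s : ℝ => (1 + s) * (1 + η) / 4) ξ = (1 + η) / 4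
    rw [show (fun s : ℝ => (1 + s) * (1 + η) / 4) = fun s => (1 + η) / 4 + ((1 + η) / 4) * s from
      funext fun s => by ring, deriv_affine]

lemma derivη_shapeN (i : Fin 4) (ξ η : ℝ) :
    deriv (fun t => shapeN i ξ t) η
      = ![-(1 - ξ) / 4, -(1 + ξ) / 4, (1 - ξ) / 4, (1 + ξ) / 4] i := by
  fin_cases i
  · show deriv (fun t : ℝ => (1 - ξ) * (1 - t) / 4) η = -(1 - ξ) / 4
    rw [show (fun t : ℝ => (1 - ξ) * (1 - t) / 4) = fun t => (1 - ξ) / 4 + (-(1 - ξ) / 4) * t from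
      funext fun t => by ring, deriv_affine]
  · show deriv (fun t : ℝ => (1 + ξ) * (1 - t) / 4) η = -(1 + ξ) / 4
    rw [show (fun t : ℝ => (1 + ξ) * (1 - t) / 4) = fun t => (1 + ξ) / 4 + (-(1 + ξ) / 4) * t from
      funext fun t => by ring, deriv_affine]
  · show deriv (fun t : ℝ => (1 - ξ) * (1 + t) / 4) η = (1 - ξ) / 4
    rw [show (fun t : ℝ => (1 - ξ) * (1 + t) / 4) = fun t => (1 - ξ) / 4 + ((1 - ξ) / 4) * t from
      funext fun t => by ring, deriv_affine]
  · show deriv (fun t : ℝ => (1 + ξ) * (1 + t) / 4) η = (1 + ξ) / 4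
    rw [show (fun t : ℝ => (1 + ξ) * (1 + t) / 4) = fun t => (1 + ξ) / 4 + ((1 + ξ) / 4) * t from
      funext fun t => by ring, deriv_affine]

/-- Products of the Jacobian determinant with the shape-function gradients are linear
combinations of the shape functions: with
`det J·(∂N_j/∂r) = (∂N_j/∂ξ)J₂₂ − (∂N_j/∂η)J₂₁` and
`det J·(∂N_j/∂z) = −(∂N_j/∂ξ)J₁₂ + (∂N_j/∂η)J₁₁`, the eight stated identities hold.
(Vertices numbered `1,…,4 ↦ 0,…,3`; `r_{ij} = r_i − r_j`, `z_{ij} = z_i − z_j`.) -/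
theorem detJ_mul_shape_gradients (r z : Fin 4 → ℝ) (ξ η : ℝ) :
    let J11 := deriv (fun s => bmap r s η) ξ
    let J12 := deriv (fun t => bmap r ξ t) η
    let J21 := deriv (fun s => bmap z s η) ξ
    let J22 := deriv (fun t => bmap z ξ t) η
    let Nξ : Fin 4 → ℝ := fun j => deriv (fun s => shapeN j s η) ξ
    let Nη : Fin 4 → ℝ := fun j => deriv (fun t => shapeN j ξ t) η
    (Nξ 0 * J22 - Nη 0 * J21
      = (1/4) * (-(shapeN 0 ξ η) * (z 2 - z 1) - shapeN 1 ξ η * (z 3 - z 1)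
          - shapeN 2 ξ η * (z 2 - z 3)))
    ∧ (-(Nξ 0) * J12 + Nη 0 * J11
      = (1/4) * (shapeN 0 ξ η * (r 2 - r 1) + shapeN 1 ξ η * (r 3 - r 1)
          + shapeN 2 ξ η * (r 2 - r 3)))
    ∧ (Nξ 1 * J22 - Nη 1 * J21
      = (1/4) * (-(shapeN 0 ξ η) * (z 0 - z 2) + shapeN 1 ξ η * (z 3 - z 0)
          - shapeN 3 ξ η * (z 2 - z 3)))
    ∧ (-(Nξ 1) * J12 + Nη 1 * J11
      = (1/4) * (shapeN 0 ξ η * (r 0 - r 2) - shapeN 1 ξ η * (r 3 - r 0)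
          + shapeN 3 ξ η * (r 2 - r 3)))
    ∧ (Nξ 2 * J22 - Nη 2 * J21
      = (1/4) * (-(shapeN 0 ξ η) * (z 1 - z 0) - shapeN 2 ξ η * (z 3 - z 0)
          - shapeN 3 ξ η * (z 3 - z 1)))
    ∧ (-(Nξ 2) * J12 + Nη 2 * J11
      = (1/4) * (shapeN 0 ξ η * (r 1 - r 0) + shapeN 2 ξ η * (r 3 - r 0)
          + shapeN 3 ξ η * (r 3 - r 1)))
    ∧ (Nξ 3 * J22 - Nη 3 * J21
      = (1/4) * (-(shapeN 1 ξ η) * (z 1 - z 0) - shapeN 2 ξ η * (z 0 - z 2)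
          + shapeN 3 ξ η * (z 2 - z 1)))
    ∧ (-(Nξ 3) * J12 + Nη 3 * J11
      = (1/4) * (shapeN 1 ξ η * (r 1 - r 0) + shapeN 2 ξ η * (r 0 - r 2)
          - shapeN 3 ξ η * (r 2 - r 1))) := by
  refine ⟨?_, ?_, ?_, ?_, ?_, ?_, ?_, ?_⟩ <;>
  · simp only [derivξ_bmap, derivη_bmap, derivξ_shapeN, derivη_shapeN]
    simp only [shapeN, Matrix.cons_val_zero, Matrix.cons_val_one, Matrix.head_cons,
      Matrix.cons_val_two, Matrix.tail_cons, Matrix.cons_val_three, Matrix.cons_val_fin_one]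
    ring
end
end

section
/- The four-point Gauss quadrature rule suppresses hourglass modes for Q¹: a pair (u,v) of real polynomials in (ξ,η), each of degree at most 1 in ξ and at most 1 in η, satisfies ∂u/∂ξ = 0, ∂v/∂η = 0, and ∂u/∂η + ∂v/∂ξ = 0 at all four points (±√(1/3), ±√(1/3)) if and only if there exist a,b,c ∈ ℝ with u = a − cη and v = b + cξ. Equivalently, the space of such zero-strain fields is exactly the 3-dimensional space of rigid motions, i.e., the stacked 12×8 strain matrix has rank 5. -/
open MvPolynomial

lemma fin2_finsupp_eq (m : Fin 2 →₀ ℕ) :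
    m = Finsupp.single 0 (m 0) + Finsupp.single 1 (m 1) := by
  ext i; fin_cases i <;> simp [Finsupp.single_apply]

lemma bilinear_repr (p : MvPolynomial (Fin 2) ℝ)
    (h0 : p.degreeOf 0 ≤ 1) (h1 : p.degreeOf 1 ≤ 1) :
    p = C (coeff 0 p) + C (coeff (Finsupp.single 0 1) p) * X 0
      + C (coeff (Finsupp.single 1 1) p) * X 1
      + C (coeff (Finsupp.single 0 1 + Finsupp.single 1 1) p) * X 0 * X 1 := by
  have key : ∀ m ∈ p.support, m 0 ≤ 1 ∧ m 1 ≤ 1 := fun m hm =>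
    ⟨le_trans (MvPolynomial.monomial_le_degreeOf 0 hm) h0,
     le_trans (MvPolynomial.monomial_le_degreeOf 1 hm) h1⟩
  have e0 : ∀ (a : ℝ), (C a : MvPolynomial (Fin 2) ℝ) = monomial 0 a := fun a => rfl
  have e1 : ∀ (a : ℝ), C a * X (0 : Fin 2) = monomial (Finsupp.single 0 1) a := by
    intro a; rw [X, e0, monomial_mul]; simp
  have e2 : ∀ (a : ℝ), C a * X (1 : Fin 2) = monomial (Finsupp.single 1 1) a := by
    intro a; rw [X, e0, monomial_mul]; simp
  have e3 : ∀ (a : ℝ), C a * X (0 : Fin 2) * X 1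
      = monomial (Finsupp.single 0 1 + Finsupp.single 1 1) a := by
    intro a; rw [e1, X, monomial_mul]; simp
  apply MvPolynomial.ext
  intro m
  rw [coeff_add, coeff_add, coeff_add, e0, e1, e2, e3,
    coeff_monomial, coeff_monomial, coeff_monomial, coeff_monomial]
  by_cases hm : m ∈ p.support
  · obtain ⟨hm0, hm1⟩ := key m hm
    have hrep := fin2_finsupp_eq m
    interval_cases hma : m 0 <;> interval_cases hmb : m 1 <;> rw [hrep] <;>
      norm_num [Finsupp.ext_iff, Fin.forall_fin_two, Finsupp.single_apply]
  · have hz : coeff m p = 0 := by rwa [MvPolynomial.mem_support_iff, not_not] at hm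
    rw [hz]
    split_ifs <;> subst_vars <;>
      simp_all [Finsupp.ext_iff, Fin.forall_fin_two, Finsupp.single_apply]

/-- The four-point Gauss quadrature rule suppresses hourglass modes for Q¹: a bilinear
velocity field `(u,v)` (degree at most 1 in each of `ξ = X 0`, `η = X 1`) has all three
strain-rate components `∂u/∂ξ`, `∂v/∂η`, `∂u/∂η + ∂v/∂ξ` vanishing at the four Gauss
points `(±√(1/3), ±√(1/3))` if and only if it is a rigid motion
`u = a − cη`, `v = b + cξ`. -/
theorem four_point_strain_kernel_eq_rigid_motions (u v : MvPolynomial (Fin 2) ℝ)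
    (hu0 : u.degreeOf 0 ≤ 1) (hu1 : u.degreeOf 1 ≤ 1)
    (hv0 : v.degreeOf 0 ≤ 1) (hv1 : v.degreeOf 1 ≤ 1) :
    (∀ s t : ℝ, (s = Real.sqrt (1/3) ∨ s = -Real.sqrt (1/3)) →
      (t = Real.sqrt (1/3) ∨ t = -Real.sqrt (1/3)) →
        eval ![s, t] (pderiv 0 u) = 0 ∧ eval ![s, t] (pderiv 1 v) = 0 ∧
        eval ![s, t] (pderiv 1 u + pderiv 0 v) = 0)
    ↔ ∃ a b c : ℝ, u = C a - C c * X 1 ∧ v = C b + C c * X 0 := by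
  constructor
  · intro H
    set g := Real.sqrt (1/3) with hgdef
    have hg : 0 < g := Real.sqrt_pos.mpr (by norm_num)
    have hu := bilinear_repr u hu0 hu1
    have hv := bilinear_repr v hv0 hv1
    set a0 := coeff 0 u; set a1 := coeff (Finsupp.single 0 1) u
    set a2 := coeff (Finsupp.single 1 1) u
    set a3 := coeff (Finsupp.single 0 1 + Finsupp.single 1 1) u
    set b0 := coeff 0 v; set b1 := coeff (Finsupp.single 0 1) v
    set b2 := coeff (Finsupp.single 1 1) v
    set b3 := coeff (Finsupp.single 0 1 + Finsupp.single 1 1) v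
    clear_value a0 a1 a2 a3 b0 b1 b2 b3
    obtain ⟨p1a, p1b, p1c⟩ := H g g (Or.inl rfl) (Or.inl rfl)
    obtain ⟨p2a, p2b, p2c⟩ := H g (-g) (Or.inl rfl) (Or.inr rfl)
    obtain ⟨p3a, p3b, p3c⟩ := H (-g) g (Or.inr rfl) (Or.inl rfl)
    rw [hu] at p1a p2a
    rw [hv] at p1b p3b
    rw [hu, hv] at p1c p2c p3c
    simp only [map_add, map_sub, map_mul, pderiv_C, pderiv_X_self, pderiv_X_of_ne,
      Derivation.leibniz, pderiv_X, smul_eq_mul, eval_add, eval_mul, eval_C, eval_X,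
      Matrix.cons_val_zero, Matrix.cons_val_one, Matrix.head_cons, mul_one, mul_zero,
      zero_mul, add_zero, zero_add, one_mul, Pi.single_apply] at p1a p1b p1c p2a p2b p2c p3a p3b p3c
    norm_num at p1a p1b p1c p2a p2b p2c p3a p3b p3c
    have ha3 : a3 = 0 := by
      have h : g * a3 = 0 := by linarith
      exact (mul_eq_zero.mp h).resolve_left (ne_of_gt hg)
    have hb3 : b3 = 0 := by
      have h : b3 * g = 0 := by linarith
      exact (mul_eq_zero.mp h).resolve_right (ne_of_gt hg)
    have ha1 : a1 = 0 := by rw [ha3] at p1a; simpa using p1a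
    have hb2 : b2 = 0 := by rw [hb3] at p1b; simpa using p1b
    have hab : a2 + b1 = 0 := by rw [ha3, hb3] at p1c; simpa using p1c
    refine ⟨a0, b0, -a2, ?_, ?_⟩
    · rw [hu, ha1, ha3]; simp [map_neg]
    · rw [hv, hb2, hb3]
      have hb1 : b1 = -a2 := by linarith
      rw [hb1]; simp [map_neg]
  · rintro ⟨a, b, c, rfl, rfl⟩ s t _ _
    refine ⟨?_, ?_, ?_⟩ <;>
      simp [map_sub, map_add, pderiv_X_self, pderiv_X_of_ne, pderiv_C]
end

section
/- Hourglass modes exist for the Q²–Q¹ discretization with the four-point Gauss rule: there exists a pair (u,v) of real polynomials in (ξ,η), each of degree at most 2 in ξ and at most 2 in η, such that ∂u/∂ξ, ∂v/∂η, and ∂u/∂η + ∂v/∂ξ all vanish at the four points (±√(1/3), ±√(1/3)), yet (u,v) is not a rigid motion, i.e., there are no a,b,c ∈ ℝ with u = a − cη and v = b + cξ. Indeed, the space of such zero-strain fields has dimension at least 18 − 12 = 6 > 3. -/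
/-!
The hourglass mode is `u = ξ (3η² - 1)`, `v = -η (3ξ² - 1)`. The factor `3t² - 1` vanishes at
the Gauss nodes `±√(1/3)`, which kills both normal strains `∂u/∂ξ = 3η² - 1` and
`∂v/∂η = -(3ξ² - 1)` there, while the shear strain `6ξη - 6ξη` vanishes identically.
The field is not rigid because `u` takes different values at `(0,0)` and `(1,0)`.
-/

open MvPolynomial

namespace MvPolynomial

variable {R σ : Type*} [CommRing R]

@[simp]
theorem pderiv_ofNat (i : σ) (n : ℕ) [n.AtLeastTwo] :
    pderiv i (ofNat(n) : MvPolynomial σ R) = 0 :=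
  mod_cast (pderiv i).map_natCast n

/-- `2 P₂` for the Legendre polynomial `P₂`, in the variable `j`: its roots are the nodes of the
two-point Gauss rule. -/
noncomputable def legendreTwo (j : σ) : MvPolynomial σ R := 3 * X j ^ 2 - 1

theorem eval_legendreTwo (x : σ → R) (j : σ) :
    eval x (legendreTwo j : MvPolynomial σ R) = 3 * x j ^ 2 - 1 := by
  simp [legendreTwo]

theorem degreeOf_legendreTwo_of_ne {i j : σ} (h : i ≠ j) :
    degreeOf i (legendreTwo j : MvPolynomial σ R) = 0 := by
  refine Nat.eq_zero_of_le_zero ((degreeOf_sub_le _ _ _).trans (max_le ?_ ?_))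
  · exact (degreeOf_C_mul_le _ _ _).trans (degreeOf_X_pow_of_ne 2 h).le
  · rw [← C_1, degreeOf_C]

theorem degreeOf_legendreTwo_le (i j : σ) :
    degreeOf i (legendreTwo j : MvPolynomial σ R) ≤ 2 := by
  rcases eq_or_ne i j with rfl | h
  · refine (degreeOf_sub_le _ _ _).trans (max_le ?_ ?_)
    · refine (degreeOf_C_mul_le _ _ _).trans ((degreeOf_pow_le _ _ 2).trans ?_)
      simpa using degreeOf_mul_X_self i (1 : MvPolynomial σ R)
    · rw [← C_1, degreeOf_C]; omega
  · rw [degreeOf_legendreTwo_of_ne h]; omega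

theorem degreeOf_legendreTwo_mul_X_le {i j : σ} (k : σ) (h : i ≠ j) :
    degreeOf k (legendreTwo j * X i : MvPolynomial σ R) ≤ 2 := by
  rcases eq_or_ne k i with rfl | hk
  · exact (degreeOf_mul_X_self _ _).trans (by rw [degreeOf_legendreTwo_of_ne h]; omega)
  · rw [degreeOf_mul_X_of_ne _ hk]
    exact degreeOf_legendreTwo_le k j

theorem pderiv_legendreTwo_mul_X_self {i j : σ} (h : i ≠ j) :
    pderiv i (legendreTwo j * X i : MvPolynomial σ R) = legendreTwo j := by
  simp [legendreTwo, h.symm]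

theorem pderiv_legendreTwo_mul_X_of_ne {i j : σ} (h : i ≠ j) :
    pderiv j (legendreTwo j * X i : MvPolynomial σ R) = 6 * X j * X i := by
  simp [legendreTwo, h]
  ring

theorem legendreTwo_mul_X_ne_affine [Nontrivial R] :
    ¬ ∃ a c : R, (legendreTwo 1 * X 0 : MvPolynomial (Fin 2) R) = C a - C c * X 1 := by
  rintro ⟨a, c, hu⟩
  have h₀₀ : 0 = a := by simpa [eval_legendreTwo] using congrArg (eval ![0, 0]) hu
  have h₁₀ : -1 = a := by simpa [eval_legendreTwo] using congrArg (eval ![1, 0]) hu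
  simpa using h₁₀.trans h₀₀.symm

end MvPolynomial

theorem three_mul_sq_eq_one_of_gaussNode {s : ℝ} (hs : s = √(1 / 3) ∨ s = -√(1 / 3)) :
    3 * s ^ 2 = 1 := by
  rcases hs with rfl | rfl <;> simp

/-- Hourglass modes exist for the Q²–Q¹ discretization with the four-point Gauss rule:
there is a Q² velocity field `(u,v)` (degree at most 2 in each of `ξ = X 0`, `η = X 1`)
whose strain-rate components `∂u/∂ξ`, `∂v/∂η`, `∂u/∂η + ∂v/∂ξ` all vanish at the four
Gauss points `(±√(1/3), ±√(1/3))`, yet `(u,v)` is not a rigid motion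
`u = a − cη`, `v = b + cξ`. -/
theorem hourglass_modes_exist_Q2 :
    ∃ u v : MvPolynomial (Fin 2) ℝ,
      u.degreeOf 0 ≤ 2 ∧ u.degreeOf 1 ≤ 2 ∧ v.degreeOf 0 ≤ 2 ∧ v.degreeOf 1 ≤ 2 ∧
      (∀ s t : ℝ, (s = Real.sqrt (1/3) ∨ s = -Real.sqrt (1/3)) →
        (t = Real.sqrt (1/3) ∨ t = -Real.sqrt (1/3)) →
          eval ![s, t] (pderiv 0 u) = 0 ∧ eval ![s, t] (pderiv 1 v) = 0 ∧
          eval ![s, t] (pderiv 1 u + pderiv 0 v) = 0) ∧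
      ¬ ∃ a b c : ℝ, u = C a - C c * X 1 ∧ v = C b + C c * X 0 := by
  refine ⟨legendreTwo 1 * X 0, -(legendreTwo 0 * X 1),
    degreeOf_legendreTwo_mul_X_le 0 zero_ne_one, degreeOf_legendreTwo_mul_X_le 1 zero_ne_one,
    ?_, ?_, ?_, ?_⟩
  · rw [degreeOf_neg]; exact degreeOf_legendreTwo_mul_X_le 0 one_ne_zero
  · rw [degreeOf_neg]; exact degreeOf_legendreTwo_mul_X_le 1 one_ne_zero
  · intro s t hs ht
    simp only [map_neg, pderiv_legendreTwo_mul_X_self zero_ne_one,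
      pderiv_legendreTwo_mul_X_self one_ne_zero, pderiv_legendreTwo_mul_X_of_ne zero_ne_one,
      pderiv_legendreTwo_mul_X_of_ne one_ne_zero]
    refine ⟨?_, ?_, ?_⟩
    · simp [eval_legendreTwo, three_mul_sq_eq_one_of_gaussNode ht]
    · simp [eval_legendreTwo, three_mul_sq_eq_one_of_gaussNode hs]
    · rw [mul_right_comm (6 : MvPolynomial (Fin 2) ℝ), add_neg_cancel, map_zero]
  · rintro ⟨a, -, c, hu, -⟩
    exact legendreTwo_mul_X_ne_affine ⟨a, c, hu⟩
end
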